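/- Let k, ℓ be integers with k ≥ 1 and ℓ ≥ 1. For θ ∈ [0, π/2] let P_θ = [[cos θ · I₂, −sin θ · I₂],[sin θ · I₂, cos θ · I₂]] and define G(θ, t) = P_θ · blockdiag(exp(ktJ), exp(ℓtJ)) · P_θ⁻¹ for t ∈ [0, 2π]. Then G(0,t) = blockdiag(exp(ktJ), exp(ℓtJ)), G(π/2, t) = blockdiag(exp(ℓtJ), exp(ktJ)), and for each θ the loop t ↦ G(θ,t) is a positive loop in Sp(4) based at the identity. Consequently blockdiag(exp(ktJ), exp(ℓtJ)) and blockdiag(exp(ℓtJ), exp(ktJ)) are homotopic through positive loops based at the identity. -/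

import Mathlib

/-!
Write `P_θ = exp (θ K)` for the complex structure `K = [[0, -I], [I, 0]]`: it is orthogonal
and commutes with `J₄`, so `P_θ⁻¹ = P_θᵀ`. The loop `D(t) = blockdiag(exp(ktJ), exp(ℓtJ))`
solves `D' = J₄ S D` with `S = diag(k, k, ℓ, ℓ)` positive definite, and it closes up because
`exp (2π m J) = 1` for integers `m`. Conjugating by such a `U` turns `D' = J₄ S D` into
`(U D Uᵀ)' = J₄ (U S Uᵀ) (U D Uᵀ)`, so every `G(θ, ·)` is a positive loop. Finally
`P_{π/2} = K` swaps the two blocks, and `θ ∈ [0, π/2]` is the homotopy.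
-/

open Matrix Set Real

attribute [local instance] Matrix.normedAddCommGroup Matrix.normedSpace

/-- The standard complex structure on `ℝ²`. -/
def J2 : Matrix (Fin 2) (Fin 2) ℝ := !![0, -1; 1, 0]

/-- The block-diagonal complex structure `J₄ = diag(J, J)` on `ℝ⁴`. -/
def J4 : Matrix (Fin 2 ⊕ Fin 2) (Fin 2 ⊕ Fin 2) ℝ := Matrix.fromBlocks J2 0 0 J2

/-- The 4×4 block-diagonal matrix with 2×2 diagonal blocks `X` and `Y`. -/
def blockDiag2 (X Y : Matrix (Fin 2) (Fin 2) ℝ) :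
    Matrix (Fin 2 ⊕ Fin 2) (Fin 2 ⊕ Fin 2) ℝ :=
  Matrix.fromBlocks X 0 0 Y

/-- A positive path in `Sp(4)` (taken w.r.t. `J₄ = diag(J, J)`) on the parameter set
`s`. -/
def IsPosPathJ4 (s : Set ℝ) (A : ℝ → Matrix (Fin 2 ⊕ Fin 2) (Fin 2 ⊕ Fin 2) ℝ) : Prop :=
  ∀ t ∈ s, (A t)ᵀ * J4 * A t = J4 ∧
    ∃ P : Matrix (Fin 2 ⊕ Fin 2) (Fin 2 ⊕ Fin 2) ℝ, P.IsSymm ∧ P.PosDef ∧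
      HasDerivWithinAt A (J4 * P * A t) s t

/-- A positive loop in `Sp(4)` (w.r.t. `J₄ = diag(J, J)`) based at `K`. -/
noncomputable def PosLoopJ4 (K : Matrix (Fin 2 ⊕ Fin 2) (Fin 2 ⊕ Fin 2) ℝ)
    (A : ℝ → Matrix (Fin 2 ⊕ Fin 2) (Fin 2 ⊕ Fin 2) ℝ) : Prop :=
  IsPosPathJ4 (Icc 0 (2 * π)) A ∧ A 0 = K ∧ A (2 * π) = K

/-- Two loops in `Sp(4)` (w.r.t. `J₄ = diag(J, J)`) based at `K` are homotopic through
positive loops based at `K`. -/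
noncomputable def PosHomotopicJ4 (K : Matrix (Fin 2 ⊕ Fin 2) (Fin 2 ⊕ Fin 2) ℝ)
    (A B : ℝ → Matrix (Fin 2 ⊕ Fin 2) (Fin 2 ⊕ Fin 2) ℝ) : Prop :=
  ∃ H : ℝ → ℝ → Matrix (Fin 2 ⊕ Fin 2) (Fin 2 ⊕ Fin 2) ℝ,
    ContinuousOn (fun p : ℝ × ℝ => H p.1 p.2) (Icc 0 1 ×ˢ Icc 0 (2 * π)) ∧
    (∀ t ∈ Icc (0 : ℝ) (2 * π), H 0 t = A t ∧ H 1 t = B t) ∧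
    (∀ s ∈ Icc (0 : ℝ) 1, H s 0 = K ∧ H s (2 * π) = K) ∧
    (∀ s ∈ Icc (0 : ℝ) 1, IsPosPathJ4 (Icc 0 (2 * π)) (H s))

theorem NormedSpace.exp_smul_eq_cos_smul_one_add_sin_smul {A : Type*} [NormedRing A]
    [NormedAlgebra ℝ A] {j : A} (hj : j * j = -1) (a : ℝ) :
    NormedSpace.exp (a • j) = cos a • 1 + sin a • j := by
  -- `map_exp` needs a `ℚ`-algebra structure on `A`.
  let : Algebra ℚ A := Algebra.compHom A (algebraMap ℚ ℝ)
  set f := Complex.liftAux j hj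
  have hf : Continuous f := LinearMap.continuous_of_finiteDimensional f.toLinearMap
  calc NormedSpace.exp (a • j) = NormedSpace.exp (f (a * Complex.I)) := by simp [f]
    _ = f (Complex.exp (a * Complex.I)) := by rw [Complex.exp_eq_exp_ℂ, NormedSpace.map_exp f hf]
    _ = cos a • 1 + sin a • j := by
      rw [Complex.exp_mul_I]
      simp [f, Algebra.algebraMap_eq_smul_one, Complex.cos_ofReal_re, Complex.sin_ofReal_re]

namespace Matrix

variable {n : Type*}

theorem PosDef.isSymm {P : Matrix n n ℝ} (hP : P.PosDef) : P.IsSymm := by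
  simpa [IsSymm, conjTranspose_eq_transpose_of_trivial] using hP.isHermitian.eq

variable [Fintype n] [DecidableEq n]

theorem exp_smul_eq_cos_smul_one_add_sin_smul {j : Matrix n n ℝ} (hj : j * j = -1) (a : ℝ) :
    NormedSpace.exp (a • j) = cos a • 1 + sin a • j := by
  -- `exp` does not depend on the norm: borrow the Banach algebra structure of the `L∞` op norm.
  let : NormedRing (Matrix n n ℝ) := Matrix.linftyOpNormedRing
  let : NormedAlgebra ℝ (Matrix n n ℝ) := Matrix.linftyOpNormedAlgebra
  exact NormedSpace.exp_smul_eq_cos_smul_one_add_sin_smul hj a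

theorem continuous_exp_smul_of_mul_self_eq_neg_one {j : Matrix n n ℝ} (hj : j * j = -1) :
    Continuous fun a : ℝ => NormedSpace.exp (a • j) := by
  simp only [exp_smul_eq_cos_smul_one_add_sin_smul hj]
  fun_prop

theorem transpose_exp_mul_exp_of_transpose_eq_neg {X : Matrix n n ℝ} (hX : Xᵀ = -X) :
    (NormedSpace.exp X)ᵀ * NormedSpace.exp X = 1 := by
  rw [← exp_transpose, hX, ← exp_add_of_commute _ _ (Commute.neg_left (Commute.refl X)),
    neg_add_cancel, NormedSpace.exp_zero]

end Matrix

theorem J2_mul_J2 : J2 * J2 = -1 := by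
  ext i j
  fin_cases i <;> fin_cases j <;> simp [J2]

theorem J2_transpose : J2ᵀ = -J2 := by
  ext i j
  fin_cases i <;> fin_cases j <;> simp [J2]

theorem exp_smul_J2 (a : ℝ) : NormedSpace.exp (a • J2) = cos a • 1 + sin a • J2 :=
  Matrix.exp_smul_eq_cos_smul_one_add_sin_smul J2_mul_J2 a

theorem exp_int_mul_two_pi_smul_J2 (m : ℤ) : NormedSpace.exp ((m * (2 * π)) • J2) = 1 := by
  have hsin : sin (m * (2 * π)) = 0 := by simpa using sin_int_mul_two_pi_sub 0 m
  rw [exp_smul_J2, cos_int_mul_two_pi, hsin, zero_smul, one_smul, add_zero]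

theorem commute_J2_exp_smul_J2 (a : ℝ) : Commute J2 (NormedSpace.exp (a • J2)) := by
  rw [exp_smul_J2]
  exact ((Commute.one_right J2).smul_right _).add_right ((Commute.refl J2).smul_right _)

theorem transpose_exp_smul_J2_mul_J2_mul (a : ℝ) :
    (NormedSpace.exp (a • J2))ᵀ * J2 * NormedSpace.exp (a • J2) = J2 := by
  have horth := Matrix.transpose_exp_mul_exp_of_transpose_eq_neg
    (show (a • J2)ᵀ = -(a • J2) by rw [Matrix.transpose_smul, J2_transpose, smul_neg])
  rw [mul_assoc, (commute_J2_exp_smul_J2 a).eq, ← mul_assoc, horth, one_mul]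

theorem hasDerivAt_exp_mul_smul_J2 (a t : ℝ) :
    HasDerivAt (fun t => NormedSpace.exp ((a * t) • J2))
      (a • (J2 * NormedSpace.exp ((a * t) • J2))) t := by
  have hlin : HasDerivAt (fun t => a * t) a t := by simpa using (hasDerivAt_id t).const_mul a
  have h := (hlin.cos.smul_const (1 : Matrix (Fin 2) (Fin 2) ℝ)).add (hlin.sin.smul_const J2)
  rw [show (fun t => NormedSpace.exp ((a * t) • J2)) = _ from funext fun t => exp_smul_J2 (a * t),
    exp_smul_J2]
  refine h.congr_deriv ?_
  simp only [mul_add, Matrix.mul_smul, mul_one, J2_mul_J2, smul_neg]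
  module

theorem J4_eq_blockDiag2 : J4 = blockDiag2 J2 J2 := rfl

theorem blockDiag2_mul (X Y Z W : Matrix (Fin 2) (Fin 2) ℝ) :
    blockDiag2 X Y * blockDiag2 Z W = blockDiag2 (X * Z) (Y * W) := by
  simp [blockDiag2, fromBlocks_multiply]

theorem blockDiag2_transpose (X Y : Matrix (Fin 2) (Fin 2) ℝ) :
    (blockDiag2 X Y)ᵀ = blockDiag2 Xᵀ Yᵀ := by
  simp [blockDiag2, fromBlocks_transpose]

theorem blockDiag2_one : blockDiag2 1 1 = 1 := fromBlocks_one

theorem posDef_blockDiag2_smul_one {a b : ℝ} (ha : 0 < a) (hb : 0 < b) :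
    (blockDiag2 (a • 1) (b • 1)).PosDef := by
  rw [blockDiag2, smul_one_eq_diagonal, smul_one_eq_diagonal, fromBlocks_diagonal]
  exact PosDef.diagonal (by rintro (i | i) <;> assumption)

theorem HasDerivAt.blockDiag2 {X Y : ℝ → Matrix (Fin 2) (Fin 2) ℝ}
    {X' Y' : Matrix (Fin 2) (Fin 2) ℝ} {t : ℝ} (hX : HasDerivAt X X' t)
    (hY : HasDerivAt Y Y' t) :
    HasDerivAt (fun s => blockDiag2 (X s) (Y s)) (blockDiag2 X' Y') t := by
  let L : (Matrix (Fin 2) (Fin 2) ℝ × Matrix (Fin 2) (Fin 2) ℝ) →ₗ[ℝ]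
      Matrix (Fin 2 ⊕ Fin 2) (Fin 2 ⊕ Fin 2) ℝ :=
    { toFun := fun p => _root_.blockDiag2 p.1 p.2
      map_add' := fun p q => by simp [_root_.blockDiag2, fromBlocks_add]
      map_smul' := fun c p => by simp [_root_.blockDiag2, fromBlocks_smul] }
  exact L.toContinuousLinearMap.hasFDerivAt.comp_hasDerivAt t (hX.prodMk hY)

theorem isPosPathJ4_blockDiag2_exp {a b : ℝ} (ha : 0 < a) (hb : 0 < b) (s : Set ℝ) :
    IsPosPathJ4 s fun t =>
      blockDiag2 (NormedSpace.exp ((a * t) • J2)) (NormedSpace.exp ((b * t) • J2)) := by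
  intro t _
  have hP := posDef_blockDiag2_smul_one ha hb
  refine ⟨?_, _, hP.isSymm, hP, ?_⟩
  · simp only [J4_eq_blockDiag2, blockDiag2_transpose, blockDiag2_mul,
      transpose_exp_smul_J2_mul_J2_mul]
  · refine (HasDerivAt.blockDiag2 (hasDerivAt_exp_mul_smul_J2 a t)
      (hasDerivAt_exp_mul_smul_J2 b t)).hasDerivWithinAt.congr_deriv ?_
    simp only [J4_eq_blockDiag2, blockDiag2_mul, mul_smul_comm, mul_one, smul_mul_assoc]

theorem IsPosPathJ4.conj {s : Set ℝ} {A : ℝ → Matrix (Fin 2 ⊕ Fin 2) (Fin 2 ⊕ Fin 2) ℝ}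
    (hA : IsPosPathJ4 s A) {U : Matrix (Fin 2 ⊕ Fin 2) (Fin 2 ⊕ Fin 2) ℝ} (hU : Uᵀ * U = 1)
    (hUJ : Commute U J4) :
    IsPosPathJ4 s fun t => U * A t * Uᵀ := by
  have hU' : U * Uᵀ = 1 := mul_eq_one_comm.mp hU
  intro t ht
  obtain ⟨hsymp, P, -, hPdef, hderiv⟩ := hA t ht
  have hQ : (U * P * Uᵀ).PosDef := by
    have hunit : IsUnit U := (isUnit_iff_isUnit_det U).mpr (isUnit_det_of_right_inverse hU')
    simpa [star_eq_conjTranspose, conjTranspose_eq_transpose_of_trivial] using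
      (IsUnit.posDef_star_right_conjugate_iff hunit).mpr hPdef
  refine ⟨?_, _, hQ.isSymm, hQ, ?_⟩
  · calc (U * A t * Uᵀ)ᵀ * J4 * (U * A t * Uᵀ)
        = U * ((A t)ᵀ * (Uᵀ * (J4 * U)) * A t) * Uᵀ := by
          simp only [transpose_mul, transpose_transpose, mul_assoc]
      _ = J4 := by
          rw [← hUJ.eq, ← mul_assoc Uᵀ, hU, one_mul, hsymp, hUJ.eq, mul_assoc, hU', mul_one]
  · let L := ((LinearMap.mulRight ℝ Uᵀ).comp (LinearMap.mulLeft ℝ U)).toContinuousLinearMap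
    refine (L.hasFDerivAt.comp_hasDerivWithinAt t hderiv).congr_deriv ?_
    calc U * (J4 * P * A t) * Uᵀ = J4 * U * P * (Uᵀ * U) * A t * Uᵀ := by
          rw [hU, ← hUJ.eq]; simp only [mul_one, mul_assoc]
      _ = J4 * (U * P * Uᵀ) * (U * A t * Uᵀ) := by simp only [mul_assoc]

theorem PosLoopJ4.conj {A : ℝ → Matrix (Fin 2 ⊕ Fin 2) (Fin 2 ⊕ Fin 2) ℝ}
    (hA : PosLoopJ4 1 A)
    {U : Matrix (Fin 2 ⊕ Fin 2) (Fin 2 ⊕ Fin 2) ℝ} (hU : Uᵀ * U = 1) (hUJ : Commute U J4) :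
    PosLoopJ4 1 fun t => U * A t * Uᵀ := by
  obtain ⟨hpath, h0, h2π⟩ := hA
  have hU' : U * Uᵀ = 1 := mul_eq_one_comm.mp hU
  exact ⟨hpath.conj hU hUJ, by simp only [h0, mul_one, hU'], by simp only [h2π, mul_one, hU']⟩

theorem posLoopJ4_blockDiag2_exp {k ℓ : ℤ} (hk : 0 < k) (hl : 0 < ℓ) :
    PosLoopJ4 1 fun t =>
      blockDiag2 (NormedSpace.exp ((k * t) • J2)) (NormedSpace.exp ((ℓ * t) • J2)) :=
  ⟨isPosPathJ4_blockDiag2_exp (Int.cast_pos.mpr hk) (Int.cast_pos.mpr hl) _,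
    by simp only [mul_zero, zero_smul, NormedSpace.exp_zero, blockDiag2_one],
    by simp only [exp_int_mul_two_pi_smul_J2, blockDiag2_one]⟩

def K4 : Matrix (Fin 2 ⊕ Fin 2) (Fin 2 ⊕ Fin 2) ℝ := fromBlocks 0 (-1) 1 0

theorem K4_mul_K4 : K4 * K4 = -1 := by
  simp [K4, fromBlocks_multiply, ← fromBlocks_one, fromBlocks_neg]

theorem K4_transpose : K4ᵀ = -K4 := by
  simp [K4, fromBlocks_transpose, fromBlocks_neg]

theorem commute_K4_J4 : Commute K4 J4 := by
  simp [Commute, SemiconjBy, K4, J4, fromBlocks_multiply]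

theorem exp_smul_K4 (θ : ℝ) : NormedSpace.exp (θ • K4) = cos θ • 1 + sin θ • K4 :=
  Matrix.exp_smul_eq_cos_smul_one_add_sin_smul K4_mul_K4 θ

theorem fromBlocks_cos_sin_eq_exp_smul_K4 (θ : ℝ) :
    fromBlocks (cos θ • 1) ((-sin θ) • 1) (sin θ • 1) (cos θ • 1) =
      NormedSpace.exp (θ • K4) := by
  rw [exp_smul_K4, K4, ← fromBlocks_one (l := Fin 2) (m := Fin 2), fromBlocks_smul,
    fromBlocks_smul, fromBlocks_add]
  simp

theorem transpose_exp_smul_K4_mul_self (θ : ℝ) :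
    (NormedSpace.exp (θ • K4))ᵀ * NormedSpace.exp (θ • K4) = 1 :=
  Matrix.transpose_exp_mul_exp_of_transpose_eq_neg
    (by rw [transpose_smul, K4_transpose, smul_neg])

theorem commute_exp_smul_K4_J4 (θ : ℝ) : Commute (NormedSpace.exp (θ • K4)) J4 := by
  rw [exp_smul_K4]
  exact ((Commute.one_left J4).smul_left _).add_left (commute_K4_J4.smul_left _)

theorem exp_pi_div_two_smul_K4 : NormedSpace.exp ((π / 2) • K4) = K4 := by
  simp [exp_smul_K4]

theorem K4_mul_blockDiag2_mul_transpose (X Y : Matrix (Fin 2) (Fin 2) ℝ) :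
    K4 * blockDiag2 X Y * K4ᵀ = blockDiag2 Y X := by
  simp [K4, blockDiag2, fromBlocks_transpose, fromBlocks_multiply]

/-- The conjugated loops `G(θ,t) = P_θ · blockdiag(exp(ktJ), exp(ℓtJ)) · P_θ⁻¹` form a
homotopy through positive loops based at the identity between
`blockdiag(exp(ktJ), exp(ℓtJ))` and `blockdiag(exp(ℓtJ), exp(ktJ))`. -/
theorem stmt15 (k ℓ : ℤ) (hk : 1 ≤ k) (hl : 1 ≤ ℓ)
    (Pmat : ℝ → Matrix (Fin 2 ⊕ Fin 2) (Fin 2 ⊕ Fin 2) ℝ)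
    (hP : ∀ θ : ℝ, Pmat θ =
      Matrix.fromBlocks (Real.cos θ • (1 : Matrix (Fin 2) (Fin 2) ℝ))
        ((-Real.sin θ) • (1 : Matrix (Fin 2) (Fin 2) ℝ))
        (Real.sin θ • (1 : Matrix (Fin 2) (Fin 2) ℝ))
        (Real.cos θ • (1 : Matrix (Fin 2) (Fin 2) ℝ)))
    (G : ℝ → ℝ → Matrix (Fin 2 ⊕ Fin 2) (Fin 2 ⊕ Fin 2) ℝ)
    (hG : ∀ θ t : ℝ, G θ t =
      Pmat θ *
        blockDiag2 (NormedSpace.exp (((k : ℝ) * t) • J2))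
          (NormedSpace.exp (((ℓ : ℝ) * t) • J2)) *
        (Pmat θ)⁻¹) :
    (∀ t : ℝ, G 0 t = blockDiag2 (NormedSpace.exp (((k : ℝ) * t) • J2))
        (NormedSpace.exp (((ℓ : ℝ) * t) • J2))) ∧
    (∀ t : ℝ, G (π / 2) t = blockDiag2 (NormedSpace.exp (((ℓ : ℝ) * t) • J2))
        (NormedSpace.exp (((k : ℝ) * t) • J2))) ∧
    (∀ θ ∈ Icc (0 : ℝ) (π / 2), PosLoopJ4 1 (G θ)) ∧
    PosHomotopicJ4 1
      (fun t => blockDiag2 (NormedSpace.exp (((k : ℝ) * t) • J2))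
        (NormedSpace.exp (((ℓ : ℝ) * t) • J2)))
      (fun t => blockDiag2 (NormedSpace.exp (((ℓ : ℝ) * t) • J2))
        (NormedSpace.exp (((k : ℝ) * t) • J2))) := by
  have hGθ (θ : ℝ) : G θ = fun t : ℝ => NormedSpace.exp (θ • K4) *
      blockDiag2 (NormedSpace.exp ((k * t) • J2)) (NormedSpace.exp ((ℓ * t) • J2)) *
      (NormedSpace.exp (θ • K4))ᵀ := by
    ext1 t
    rw [hG, hP, fromBlocks_cos_sin_eq_exp_smul_K4,
      inv_eq_left_inv (transpose_exp_smul_K4_mul_self θ)]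
  have hloop (θ : ℝ) : PosLoopJ4 1 (G θ) := by
    rw [hGθ]
    exact (posLoopJ4_blockDiag2_exp (by omega) (by omega)).conj
      (transpose_exp_smul_K4_mul_self θ) (commute_exp_smul_K4_J4 θ)
  have hG0 (t : ℝ) : G 0 t = blockDiag2 (NormedSpace.exp ((k * t) • J2))
      (NormedSpace.exp ((ℓ * t) • J2)) := by
    simp only [hGθ, zero_smul, NormedSpace.exp_zero, transpose_one, one_mul, mul_one]
  have hGπ (t : ℝ) : G (π / 2) t = blockDiag2 (NormedSpace.exp ((ℓ * t) • J2))
      (NormedSpace.exp ((k * t) • J2)) := by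
    simp only [hGθ, exp_pi_div_two_smul_K4, K4_mul_blockDiag2_mul_transpose]
  have hcont : Continuous fun p : ℝ × ℝ => G (p.1 * (π / 2)) p.2 := by
    have hK := (Matrix.continuous_exp_smul_of_mul_self_eq_neg_one K4_mul_K4).comp
      (continuous_fst.mul continuous_const : Continuous fun p : ℝ × ℝ => p.1 * (π / 2))
    have hJ (m : ℝ) := (Matrix.continuous_exp_smul_of_mul_self_eq_neg_one J2_mul_J2).comp
      (continuous_const.mul continuous_snd : Continuous fun p : ℝ × ℝ => m * p.2)
    simp only [hGθ]
    exact (hK.matrix_mul ((hJ k).matrix_fromBlocks continuous_const continuous_const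
      (hJ ℓ))).matrix_mul hK.matrix_transpose
  refine ⟨hG0, hGπ, fun θ _ => hloop θ, fun s t => G (s * (π / 2)) t, hcont.continuousOn,
    fun t _ => ⟨?_, ?_⟩, fun s _ => (hloop _).2, fun s _ => (hloop _).1⟩
  · simp only [zero_mul, hG0]
  · simp only [one_mul, hGπ]
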